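/- Let D(t) ∈ ℂ[t] be non-square, monic of even degree 2d with vanishing coefficient of t^{2d−1}, so √D = t^d + O(t^{d−2}) in ℂ((t^{-1})). With S_n = p_n p_{n+1} − q_n q_{n+1} D as above, one has S_n = ± t^d + O(t^{d−2}); more precisely S_n = (−1)^n √D + O(t^{d − l_n − l_{n+1}}) where l_m = deg a_m. -/
import Mathlib


open Polynomial

/-- An abstract model of the field `ℂ((t⁻¹))` of formal Laurent series at `t = ∞`:
`ι` embeds the rational functions `ℂ(t)`, `v f` is the order of vanishing of `f` at
`t = ∞` (so `v p = -deg p` for a nonzero polynomial `p`), and `polyPart f` is the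
polynomial part of `f` (the unique polynomial `g` with `f - g` vanishing at `∞`). -/
structure LaurentAtInfModel (F : Type*) [Field F] where
  ι : RatFunc ℂ →+* F
  v : F → ℤ
  polyPart : F → ℂ[X]
  v_mul : ∀ f g : F, f ≠ 0 → g ≠ 0 → v (f * g) = v f + v g
  v_add : ∀ f g : F, f ≠ 0 → g ≠ 0 → f + g ≠ 0 → min (v f) (v g) ≤ v (f + g)
  v_poly : ∀ p : ℂ[X], p ≠ 0 → v (ι (algebraMap ℂ[X] (RatFunc ℂ) p)) = -(p.natDegree : ℤ)
  polyPart_spec : ∀ f : F,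
      f - ι (algebraMap ℂ[X] (RatFunc ℂ) (polyPart f)) = 0 ∨
        1 ≤ v (f - ι (algebraMap ℂ[X] (RatFunc ℂ) (polyPart f)))
  polyPart_unique : ∀ (f : F) (g : ℂ[X]),
      (f - ι (algebraMap ℂ[X] (RatFunc ℂ) g) = 0 ∨
        1 ≤ v (f - ι (algebraMap ℂ[X] (RatFunc ℂ) g))) → g = polyPart f

namespace LaurentAtInfModel

variable {F : Type*} [Field F] (M : LaurentAtInfModel F)

/-- The image of a polynomial in the model. -/
noncomputable def ofPoly (p : ℂ[X]) : F := M.ι (algebraMap ℂ[X] (RatFunc ℂ) p)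

/-- The complete quotients (tails) `λ_n` of the continued fraction of `lam`:
`λ₀ = lam`, `λ_{n+1} = 1 / (λ_n - a_n)`. -/
noncomputable def tail (lam : F) : ℕ → F
  | 0 => lam
  | n + 1 => (tail lam n - M.ofPoly (M.polyPart (tail lam n)))⁻¹

/-- The partial quotients `a_n` of the continued fraction of `lam`. -/
noncomputable def pq (lam : F) (n : ℕ) : ℂ[X] := M.polyPart (M.tail lam n)

/-- The convergent numerators `p_n`, computed formally from the partial quotients in
the standard way, with `(p₀, q₀) = (1, 0)`: `p_{n+1} = a_n p_n + p_{n-1}`. -/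
noncomputable def num (lam : F) : ℕ → ℂ[X]
  | 0 => 1
  | 1 => M.pq lam 0
  | n + 2 => M.pq lam (n + 1) * num lam (n + 1) + num lam n

/-- The convergent denominators `q_n`: `q_{n+1} = a_n q_n + q_{n-1}`. -/
noncomputable def den (lam : F) : ℕ → ℂ[X]
  | 0 => 0
  | 1 => 1
  | n + 2 => M.pq lam (n + 1) * den lam (n + 1) + den lam n

/-- `lam ∈ ℂ((t⁻¹))` is irrational: not a rational function of `t`. -/
def Irrational (lam : F) : Prop := ∀ r : RatFunc ℂ, lam ≠ M.ι r


lemma ofPoly_one' : M.ofPoly 1 = 1 := by simp [ofPoly]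
lemma ofPoly_mul' (p q : ℂ[X]) : M.ofPoly (p * q) = M.ofPoly p * M.ofPoly q := by
  simp [ofPoly, map_mul]
lemma ofPoly_add' (p q : ℂ[X]) : M.ofPoly (p + q) = M.ofPoly p + M.ofPoly q := by
  simp [ofPoly, map_add]
lemma ofPoly_sub' (p q : ℂ[X]) : M.ofPoly (p - q) = M.ofPoly p - M.ofPoly q := by
  simp [ofPoly, map_sub]
lemma ofPoly_neg' (p : ℂ[X]) : M.ofPoly (-p) = -M.ofPoly p := by simp [ofPoly, map_neg]
lemma ofPoly_pow' (p : ℂ[X]) (n : ℕ) : M.ofPoly (p ^ n) = M.ofPoly p ^ n := by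
  simp [ofPoly, map_pow]
lemma ofPoly_zero' : M.ofPoly 0 = 0 := by simp [ofPoly]

lemma ofPoly_ne_zero {p : ℂ[X]} (hp : p ≠ 0) : M.ofPoly p ≠ 0 := by
  intro h
  apply hp
  have h1 : algebraMap ℂ[X] (RatFunc ℂ) p = 0 := by
    apply M.ι.injective
    simpa [ofPoly] using h
  exact (RatFunc.algebraMap_injective ℂ) (by simpa using h1)

lemma v_one' : M.v 1 = 0 := by
  have h := M.v_poly 1 one_ne_zero
  simpa [ofPoly] using h

lemma v_ofPoly {p : ℂ[X]} (hp : p ≠ 0) : M.v (M.ofPoly p) = -(p.natDegree : ℤ) :=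
  M.v_poly p hp

lemma v_neg_one : M.v (-1 : F) = 0 := by
  have h := M.v_mul (-1 : F) (-1) (by norm_num) (by norm_num)
  rw [show ((-1 : F) * -1) = 1 by ring, M.v_one'] at h
  omega

lemma v_neg' (f : F) (hf : f ≠ 0) : M.v (-f) = M.v f := by
  have h := M.v_mul (-1) f (by norm_num) hf
  rw [M.v_neg_one] at h
  simpa using h

lemma v_inv' (f : F) (hf : f ≠ 0) : M.v f⁻¹ = -M.v f := by
  have h := M.v_mul f f⁻¹ hf (inv_ne_zero hf)
  rw [mul_inv_cancel₀ hf, M.v_one'] at h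
  omega

lemma v_add_left {f g : F} (hf : f ≠ 0) (hg : g ≠ 0) (h : M.v f < M.v g) :
    f + g ≠ 0 ∧ M.v (f + g) = M.v f := by
  have hne : f + g ≠ 0 := by
    intro h0
    have hgf : g = -f := by linear_combination h0
    rw [hgf, M.v_neg' f hf] at h
    exact lt_irrefl _ h
  refine ⟨hne, ?_⟩
  have h1 := M.v_add f g hf hg hne
  have h2 := M.v_add (f + g) (-g) hne (neg_ne_zero.2 hg) (by
    rw [show f + g + -g = f by ring]; exact hf)
  rw [show f + g + -g = f by ring, M.v_neg' g hg] at h2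
  omega

section CF

variable {w : F}

lemma tail_irrational (hirr : M.Irrational w) : ∀ n, M.Irrational (M.tail w n) := by
  intro n
  induction n with
  | zero => exact hirr
  | succ n ih =>
    intro r hr
    have h2 : M.tail w (n+1) = M.ι r := hr
    simp only [tail] at h2
    by_cases hr0 : r = 0
    · subst hr0
      rw [map_zero, inv_eq_zero, sub_eq_zero] at h2
      exact ih (algebraMap ℂ[X] (RatFunc ℂ) (M.polyPart (M.tail w n))) h2
    · have h1 : M.tail w n = M.ι (algebraMap ℂ[X] (RatFunc ℂ) (M.polyPart (M.tail w n)) + r⁻¹) := by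
        rw [map_add, map_inv₀, ← h2, inv_inv]
        simp [ofPoly]
      exact ih _ h1

lemma tail_sub_ne (hirr : M.Irrational w) (n : ℕ) :
    M.tail w n - M.ofPoly (M.pq w n) ≠ 0 := by
  intro h
  rw [sub_eq_zero] at h
  exact M.tail_irrational hirr n (algebraMap ℂ[X] (RatFunc ℂ) (M.pq w n)) h

lemma one_le_v_tail_sub (hirr : M.Irrational w) (n : ℕ) :
    1 ≤ M.v (M.tail w n - M.ofPoly (M.pq w n)) := by
  rcases M.polyPart_spec (M.tail w n) with h | h
  · exact absurd h (M.tail_sub_ne hirr n)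
  · exact h

lemma tail_succ' (n : ℕ) :
    M.tail w (n+1) = (M.tail w n - M.ofPoly (M.pq w n))⁻¹ := rfl

lemma tail_succ_ne (hirr : M.Irrational w) (n : ℕ) : M.tail w (n+1) ≠ 0 := by
  rw [M.tail_succ']
  exact inv_ne_zero (M.tail_sub_ne hirr n)

lemma v_tail_succ_le (hirr : M.Irrational w) (n : ℕ) : M.v (M.tail w (n+1)) ≤ -1 := by
  rw [M.tail_succ', M.v_inv' _ (M.tail_sub_ne hirr n)]
  have := M.one_le_v_tail_sub hirr n
  omega

lemma pq_succ_ne (hirr : M.Irrational w) (n : ℕ) : M.pq w (n+1) ≠ 0 := by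
  intro h
  have h1 := M.one_le_v_tail_sub hirr (n+1)
  rw [h, M.ofPoly_zero', sub_zero] at h1
  have h2 := M.v_tail_succ_le hirr n
  omega

lemma v_tail_succ (hirr : M.Irrational w) (n : ℕ) :
    M.v (M.tail w (n+1)) = -((M.pq w (n+1)).natDegree : ℤ) := by
  have hs := M.tail_sub_ne hirr (n+1)
  have h1 := M.one_le_v_tail_sub hirr (n+1)
  have h2 := M.v_tail_succ_le hirr n
  have key := M.v_add_left (f := M.tail w (n+1))
    (g := -(M.tail w (n+1) - M.ofPoly (M.pq w (n+1))))
    (M.tail_succ_ne hirr n) (neg_ne_zero.2 hs)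
    (by rw [M.v_neg' _ hs]; omega)
  rw [show M.tail w (n+1) + -(M.tail w (n+1) - M.ofPoly (M.pq w (n+1)))
      = M.ofPoly (M.pq w (n+1)) by ring] at key
  rw [← key.2, M.v_ofPoly (M.pq_succ_ne hirr n)]

lemma one_le_l_succ (hirr : M.Irrational w) (n : ℕ) :
    1 ≤ ((M.pq w (n+1)).natDegree : ℤ) := by
  have h1 := M.v_tail_succ hirr n
  have h2 := M.v_tail_succ_le hirr n
  omega

end CF

section EpsDel

variable {w : F}

/-- `p_n - q_n w`. -/
noncomputable def eps (w : F) (n : ℕ) : F :=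
  M.ofPoly (M.num w n) - M.ofPoly (M.den w n) * w

/-- `p_n + q_n w`. -/
noncomputable def del (w : F) (n : ℕ) : F :=
  M.ofPoly (M.num w n) + M.ofPoly (M.den w n) * w

lemma eps_zero : M.eps w 0 = 1 := by
  simp [eps, num, den, ofPoly_one', ofPoly_zero']

lemma del_zero : M.del w 0 = 1 := by
  simp [del, num, den, ofPoly_one', ofPoly_zero']

lemma eps_one : M.eps w 1 = M.ofPoly (M.pq w 0) - w := by
  simp [eps, num, den, ofPoly_one', ofPoly_zero']

lemma del_one : M.del w 1 = M.ofPoly (M.pq w 0) + w := by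
  simp [del, num, den, ofPoly_one', ofPoly_zero']

lemma eps_rec (hirr : M.Irrational w) :
    ∀ n, M.eps w (n+1) = -(M.tail w n - M.ofPoly (M.pq w n)) * M.eps w n := by
  intro n
  induction n with
  | zero =>
    rw [M.eps_one, M.eps_zero]
    have ht0 : M.tail w 0 = w := rfl
    rw [ht0]
    ring
  | succ n ih =>
    have hu : M.tail w n - M.ofPoly (M.pq w n) ≠ 0 := M.tail_sub_ne hirr n
    have h0 : M.eps w n = -(M.tail w (n+1)) * M.eps w (n+1) := by
      rw [M.tail_succ', ih]
      field_simp
    have h2 : M.eps w (n+2) = M.ofPoly (M.pq w (n+1)) * M.eps w (n+1) + M.eps w n := by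
      simp only [eps, num, den, ofPoly_add', ofPoly_mul']
      ring
    rw [h2, h0]
    ring

lemma eps_spec (hirr : M.Irrational w) :
    ∀ n, M.eps w n ≠ 0 ∧
      M.v (M.eps w n) = ∑ k ∈ Finset.range n, ((M.pq w (k+1)).natDegree : ℤ) := by
  intro n
  induction n with
  | zero => rw [M.eps_zero]; exact ⟨one_ne_zero, by simp [M.v_one']⟩
  | succ n ih =>
    have hu : M.tail w n - M.ofPoly (M.pq w n) ≠ 0 := M.tail_sub_ne hirr n
    have hvu : M.v (M.tail w n - M.ofPoly (M.pq w n)) = ((M.pq w (n+1)).natDegree : ℤ) := by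
      have h1 := M.v_tail_succ hirr n
      rw [M.tail_succ', M.v_inv' _ hu] at h1
      omega
    rw [M.eps_rec hirr n]
    refine ⟨mul_ne_zero (neg_ne_zero.2 hu) ih.1, ?_⟩
    rw [M.v_mul _ _ (neg_ne_zero.2 hu) ih.1, M.v_neg' _ hu, hvu, ih.2,
      Finset.sum_range_succ]
    ring

lemma w_ne (hirr : M.Irrational w) : w ≠ 0 := by
  intro h
  exact hirr 0 (by simp [h])

lemma w_sub_Xd_ne (hirr : M.Irrational w) (d : ℕ) : w - M.ofPoly (X ^ d) ≠ 0 := by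
  intro h
  rw [sub_eq_zero] at h
  exact hirr (algebraMap ℂ[X] (RatFunc ℂ) (X ^ d)) h

lemma v_w (hirr : M.Irrational w) {d : ℕ} (hd : 2 ≤ d)
    (hwnorm : ((2 : ℤ) - d) ≤ M.v (w - M.ofPoly (X ^ d))) : M.v w = -(d : ℤ) := by
  have hXd : (X ^ d : ℂ[X]) ≠ 0 := pow_ne_zero _ X_ne_zero
  have hf : M.ofPoly (X ^ d : ℂ[X]) ≠ 0 := M.ofPoly_ne_zero hXd
  have hvf : M.v (M.ofPoly (X ^ d : ℂ[X])) = -(d : ℤ) := by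
    rw [M.v_ofPoly hXd, natDegree_X_pow]
  have hg := M.w_sub_Xd_ne hirr d
  have key := M.v_add_left (f := M.ofPoly (X ^ d : ℂ[X])) (g := w - M.ofPoly (X ^ d))
    hf hg (by omega)
  rw [show M.ofPoly (X ^ d : ℂ[X]) + (w - M.ofPoly (X ^ d)) = w by ring] at key
  omega

lemma pq_zero_deg (hirr : M.Irrational w) {d : ℕ} (hd : 2 ≤ d)
    (hwnorm : ((2 : ℤ) - d) ≤ M.v (w - M.ofPoly (X ^ d))) :
    (M.pq w 0).natDegree = d := by
  have ht0 : M.tail w 0 = w := rfl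
  have h1 : w - M.ofPoly (M.pq w 0) ≠ 0 := by
    have := M.tail_sub_ne hirr 0; rwa [ht0] at this
  have h2 : 1 ≤ M.v (w - M.ofPoly (M.pq w 0)) := by
    have := M.one_le_v_tail_sub hirr 0; rwa [ht0] at this
  by_cases hg : M.pq w 0 - X ^ d = 0
  · rw [sub_eq_zero] at hg
    rw [hg, natDegree_X_pow]
  · have hsum : M.ofPoly (M.pq w 0 - X ^ d)
        = (w - M.ofPoly (X ^ d)) + -(w - M.ofPoly (M.pq w 0)) := by
      rw [ofPoly_sub']; ring
    have hA := M.w_sub_Xd_ne hirr d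
    have hB : -(w - M.ofPoly (M.pq w 0)) ≠ 0 := neg_ne_zero.2 h1
    have hne : (w - M.ofPoly (X ^ d)) + -(w - M.ofPoly (M.pq w 0)) ≠ 0 := by
      rw [← hsum]; exact M.ofPoly_ne_zero hg
    have h3 := M.v_add _ _ hA hB hne
    rw [M.v_neg' _ h1, ← hsum, M.v_ofPoly hg] at h3
    have h4 : ((M.pq w 0 - X ^ d).natDegree : ℤ) ≤ (d : ℤ) - 2 := by omega
    have h5 : (M.pq w 0 - X ^ d).natDegree < (X ^ d : ℂ[X]).natDegree := by
      rw [natDegree_X_pow]; omega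
    have h6 : M.pq w 0 = X ^ d + (M.pq w 0 - X ^ d) := by ring
    rw [h6, natDegree_add_eq_left_of_natDegree_lt h5, natDegree_X_pow]

lemma del_rec (n : ℕ) :
    M.del w (n+2) = M.ofPoly (M.pq w (n+1)) * M.del w (n+1) + M.del w n := by
  simp only [del, num, den, ofPoly_add', ofPoly_mul']
  ring

lemma ofPoly_two : M.ofPoly (2 : ℂ[X]) = (2 : F) := by
  rw [ofPoly, map_ofNat, map_ofNat]

lemma two_ne (hirr : M.Irrational w) : (2 : F) ≠ 0 := by
  rw [← M.ofPoly_two]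
  exact M.ofPoly_ne_zero two_ne_zero

lemma v_two : M.v (2 : F) = 0 := by
  have h := M.v_poly 2 two_ne_zero
  rw [map_ofNat, map_ofNat] at h
  simpa using h

lemma del_spec (hirr : M.Irrational w) {d : ℕ} (hd : 2 ≤ d)
    (hwnorm : ((2 : ℤ) - d) ≤ M.v (w - M.ofPoly (X ^ d))) :
    ∀ n, M.del w n ≠ 0 ∧
      M.v (M.del w n) = -∑ k ∈ Finset.range n, ((M.pq w k).natDegree : ℤ) := by
  have hΦ1 : M.del w 1 ≠ 0 ∧ M.v (M.del w 1) = -(d : ℤ) := by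
    have hsplit : M.del w 1 = 2 * w + M.eps w 1 := by
      rw [M.del_one, M.eps_one]; ring
    have h2w : (2 : F) * w ≠ 0 := mul_ne_zero (M.two_ne hirr) (M.w_ne hirr)
    have hv2w : M.v (2 * w) = -(d : ℤ) := by
      rw [M.v_mul _ _ (M.two_ne hirr) (M.w_ne hirr), M.v_two, M.v_w hirr hd hwnorm]
      ring
    have he := M.eps_spec hirr 1
    have hve : M.v (M.eps w 1) = ((M.pq w 1).natDegree : ℤ) := by
      rw [he.2, Finset.sum_range_one]
    have hl1 := M.one_le_l_succ hirr 0
    have key := M.v_add_left (f := 2 * w) (g := M.eps w 1) h2w he.1 (by omega)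
    rw [← hsplit] at key
    exact ⟨key.1, by omega⟩
  have H : ∀ n, (M.del w n ≠ 0 ∧
      M.v (M.del w n) = -∑ k ∈ Finset.range n, ((M.pq w k).natDegree : ℤ)) ∧
      (M.del w (n+1) ≠ 0 ∧
      M.v (M.del w (n+1)) = -∑ k ∈ Finset.range (n+1), ((M.pq w k).natDegree : ℤ)) := by
    intro n
    induction n with
    | zero =>
      refine ⟨⟨?_, ?_⟩, ?_, ?_⟩
      · rw [M.del_zero]; exact one_ne_zero
      · rw [M.del_zero, M.v_one']; simp
      · exact hΦ1.1
      · rw [hΦ1.2, Finset.sum_range_one, M.pq_zero_deg hirr hd hwnorm]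
    | succ n ih =>
      refine ⟨ih.2, ?_, ?_⟩
      all_goals {
        have ha := M.pq_succ_ne hirr n
        have hf : M.ofPoly (M.pq w (n+1)) * M.del w (n+1) ≠ 0 :=
          mul_ne_zero (M.ofPoly_ne_zero ha) ih.2.1
        have hvf : M.v (M.ofPoly (M.pq w (n+1)) * M.del w (n+1))
            = -((M.pq w (n+1)).natDegree : ℤ)
              - ∑ k ∈ Finset.range (n+1), ((M.pq w k).natDegree : ℤ) := by
          rw [M.v_mul _ _ (M.ofPoly_ne_zero ha) ih.2.1, M.v_ofPoly ha, ih.2.2]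
          ring
        have hl1 := M.one_le_l_succ hirr n
        have hlt : M.v (M.ofPoly (M.pq w (n+1)) * M.del w (n+1)) < M.v (M.del w n) := by
          rw [hvf, ih.1.2, Finset.sum_range_succ]
          have : (0 : ℤ) ≤ ((M.pq w n).natDegree : ℤ) := Int.ofNat_nonneg _
          omega
        have key := M.v_add_left hf ih.1.1 hlt
        rw [← M.del_rec] at key
        first
        | exact key.1
        | (rw [key.2, hvf, Finset.sum_range_succ (n := n+1)]; ring)
      }
  intro n
  exact (H n).1

lemma det_id : ∀ n, M.num w n * M.den w (n+1) - M.num w (n+1) * M.den w n = (-1) ^ n := by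
  intro n
  induction n with
  | zero => simp [num, den]
  | succ n ih =>
    have h1 : M.num w (n+2) = M.pq w (n+1) * M.num w (n+1) + M.num w n := rfl
    have h2 : M.den w (n+2) = M.pq w (n+1) * M.den w (n+1) + M.den w n := rfl
    rw [h1, h2, pow_succ]
    linear_combination (-1 : ℂ[X]) * ih

end EpsDel

end LaurentAtInfModel

/-- `S_n = p_n p_{n+1} − q_n q_{n+1} D`. -/
noncomputable def Sn {F : Type*} [Field F] (M : LaurentAtInfModel F)
    (D : Polynomial ℂ) (w : F) (n : ℕ) : Polynomial ℂ :=
  M.num w n * M.num w (n + 1) - M.den w n * M.den w (n + 1) * D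

/-- Let `D(t) ∈ ℂ[t]` be non-square, monic of even degree `2d` with vanishing coefficient of
`t^{2d−1}`, so `√D = t^d + O(t^{d−2})` in `ℂ((t⁻¹))`.  With
`S_n = p_n p_{n+1} − q_n q_{n+1} D`, one has `S_n = ± t^d + O(t^{d−2})`; more precisely
`S_n = (−1)^n √D + O(t^{d − l_n − l_{n+1}})`, where `l_m = deg a_m`.
(`f = O(t^k)` means `f = 0` or `v f ≥ -k`.) -/
theorem statement19 {F : Type*} [Field F] (M : LaurentAtInfModel F)
    (D : Polynomial ℂ) (d : ℕ) (hd : 2 ≤ d) (hdeg : D.natDegree = 2 * d)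
    (hmonic : D.Monic) (hcoeff : D.coeff (2 * d - 1) = 0)
    (hnonsq : ¬∃ g : Polynomial ℂ, D = g ^ 2)
    (w : F) (hw : w ^ 2 = M.ofPoly D) (hirr : M.Irrational w)
    (hwnorm : ((2 : ℤ) - d) ≤ M.v (w - M.ofPoly (X ^ d))) :
    ∀ n : ℕ,
      (Sn M D w n - (-1 : Polynomial ℂ) ^ n * X ^ d).natDegree ≤ d - 2 ∧
      (M.ofPoly (Sn M D w n) - (-1 : F) ^ n * w = 0 ∨
        ((M.pq w n).natDegree : ℤ) + (M.pq w (n + 1)).natDegree - d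
          ≤ M.v (M.ofPoly (Sn M D w n) - (-1 : F) ^ n * w)) := by
  intro n
  have hdet := congrArg M.ofPoly (M.det_id (w := w) n)
  rw [M.ofPoly_sub', M.ofPoly_mul', M.ofPoly_mul', M.ofPoly_pow', M.ofPoly_neg',
    M.ofPoly_one'] at hdet
  have hkey : M.ofPoly (Sn M D w n) - (-1 : F) ^ n * w = M.del w n * M.eps w (n+1) := by
    simp only [Sn, M.ofPoly_sub', M.ofPoly_mul', LaurentAtInfModel.eps,
      LaurentAtInfModel.del]
    linear_combination M.ofPoly (M.den w n) * M.ofPoly (M.den w (n+1)) * hw + w * hdet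
  have hδ := M.del_spec hirr hd hwnorm n
  have hε := M.eps_spec hirr (n+1)
  have hne : M.del w n * M.eps w (n+1) ≠ 0 := mul_ne_zero hδ.1 hε.1
  have hv : M.v (M.del w n * M.eps w (n+1))
      = ((M.pq w n).natDegree : ℤ) + (M.pq w (n+1)).natDegree - d := by
    rw [M.v_mul _ _ hδ.1 hε.1, hδ.2, hε.2]
    have e1 : ∑ k ∈ Finset.range (n+1), ((M.pq w (k+1)).natDegree : ℤ)
        = ∑ k ∈ Finset.range (n+2), ((M.pq w k).natDegree : ℤ)
          - ((M.pq w 0).natDegree : ℤ) := by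
      rw [Finset.sum_range_succ' (fun k => ((M.pq w k).natDegree : ℤ)) (n+1)]
      ring
    rw [e1, Finset.sum_range_succ, Finset.sum_range_succ,
      M.pq_zero_deg hirr hd hwnorm]
    ring
  have hl1 : 1 ≤ ((M.pq w n).natDegree : ℤ) := by
    cases n with
    | zero => rw [M.pq_zero_deg hirr hd hwnorm]; omega
    | succ m => exact M.one_le_l_succ hirr m
  have hl2 := M.one_le_l_succ hirr n
  constructor
  · by_cases h0 : Sn M D w n - (-1 : Polynomial ℂ) ^ n * X ^ d = 0
    · rw [h0]; simp
    · have hsplit : M.ofPoly (Sn M D w n - (-1 : Polynomial ℂ) ^ n * X ^ d)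
          = (M.del w n * M.eps w (n+1)) + (-1 : F) ^ n * (w - M.ofPoly (X ^ d)) := by
        rw [M.ofPoly_sub', M.ofPoly_mul', M.ofPoly_pow', M.ofPoly_neg', M.ofPoly_one']
        linear_combination hkey
      have hWX := M.w_sub_Xd_ne hirr d
      have hB : (-1 : F) ^ n * (w - M.ofPoly (X ^ d)) ≠ 0 :=
        mul_ne_zero (pow_ne_zero _ (neg_ne_zero.2 one_ne_zero)) hWX
      have hvB : M.v ((-1 : F) ^ n * (w - M.ofPoly (X ^ d)))
          = M.v (w - M.ofPoly (X ^ d)) := by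
        rcases Nat.even_or_odd n with he | ho
        · rw [he.neg_one_pow, one_mul]
        · rw [ho.neg_one_pow, neg_one_mul, M.v_neg' _ hWX]
      have hne2 : (M.del w n * M.eps w (n+1)) + (-1 : F) ^ n * (w - M.ofPoly (X ^ d)) ≠ 0 := by
        rw [← hsplit]
        exact M.ofPoly_ne_zero h0
      have h3 := M.v_add _ _ hne hB hne2
      rw [← hsplit, M.v_ofPoly h0, hvB] at h3
      have h4 : ((Sn M D w n - (-1 : Polynomial ℂ) ^ n * X ^ d).natDegree : ℤ)
          ≤ (d : ℤ) - 2 := by omega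
      omega
  · right
    rw [hkey, hv]
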